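/- If a random variable Z takes values in the interval [a, b], then Var[Z] ≤ (b - E[Z])(E[Z] - a) (Bhatia–Davis inequality). -/

import Mathlib

open MeasureTheory ProbabilityTheory

/-- Bhatia–Davis inequality: if `a ≤ Z ≤ b` almost surely on a probability space,
then `Var[Z] ≤ (b - E[Z]) * (E[Z] - a)`. -/
theorem bhatia_davis {Ω : Type*} [MeasurableSpace Ω] (μ : Measure Ω)
    [IsProbabilityMeasure μ] (Z : Ω → ℝ) (hZ : AEMeasurable Z μ)
    (a b : ℝ) (hab : ∀ᵐ ω ∂μ, a ≤ Z ω ∧ Z ω ≤ b) :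
    variance Z μ ≤ (b - ∫ ω, Z ω ∂μ) * ((∫ ω, Z ω ∂μ) - a) :=
  variance_le_sub_mul_sub hab hZ
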